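/- Let a ∈ ℝ with a ≠ 0 and let z ∈ ℝ. Define g : (0,∞) → ℝ by g(c) = logit(Φ(a·√c − z)). Then the derivative of g converges, as c → ∞, to a·|a|/2; that is, to a²/2 when a > 0 and to −a²/2 when a < 0. -/

import Mathlib

open Filter Set MeasureTheory Real

/-- The standard normal cumulative distribution function. -/
noncomputable def Phi (x : ℝ) : ℝ :=
  (2 * Real.pi) ^ (-(1 : ℝ) / 2) * ∫ t in Set.Iic x, Real.exp (-t ^ 2 / 2)

/-- The logit function, `logit x = log x - log (1 - x)`. -/
noncomputable def logit (x : ℝ) : ℝ := Real.log x - Real.log (1 - x)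

noncomputable def K : ℝ := (2 * Real.pi) ^ (-(1 : ℝ) / 2)

noncomputable def gss (t : ℝ) : ℝ := Real.exp (-t ^ 2 / 2)

lemma K_pos : 0 < K := Real.rpow_pos_of_pos (by positivity) _

lemma gss_pos (t : ℝ) : 0 < gss t := Real.exp_pos _

lemma gss_cont : Continuous gss := by
  unfold gss; continuity

lemma gss_integrable : Integrable gss := by
  have h := integrable_exp_neg_mul_sq (b := (1:ℝ)/2) (by norm_num)
  convert h using 2 with t
  unfold gss; ring_nf

lemma gss_total : K * ∫ t : ℝ, gss t = 1 := by
  have h : ∫ t : ℝ, gss t = Real.sqrt (Real.pi / (1/2)) := by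
    rw [← integral_gaussian (1/2)]
    congr 1 with t; unfold gss; ring_nf
  rw [h]
  have h2 : Real.pi / (1/2) = 2 * Real.pi := by ring
  rw [h2, Real.sqrt_eq_rpow, K]
  rw [← Real.rpow_add (by positivity)]
  norm_num

lemma Phi_eq (x : ℝ) : Phi x = K * ∫ t in Set.Iic x, gss t := rfl

lemma setIntegral_gss_pos {s : Set ℝ} (hs : MeasurableSet s) (h : volume s ≠ 0) :
    0 < ∫ t in s, gss t := by
  rw [setIntegral_pos_iff_support_of_nonneg_ae
    (Filter.Eventually.of_forall fun t => (gss_pos t).le) gss_integrable.integrableOn]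
  have : Function.support gss = Set.univ := by
    ext t; simp [Function.mem_support, (gss_pos t).ne']
  rw [this, Set.univ_inter]
  exact h.bot_lt

lemma Phi_pos (x : ℝ) : 0 < Phi x := by
  rw [Phi_eq]
  have : volume (Set.Iic x) ≠ 0 := by simp
  exact mul_pos K_pos (setIntegral_gss_pos measurableSet_Iic this)

lemma Phi_lt_one (x : ℝ) : Phi x < 1 := by
  rw [Phi_eq, ← gss_total]
  have hsplit : ∫ t : ℝ, gss t = (∫ t in Set.Iic x, gss t) + ∫ t in Set.Ioi x, gss t := by
    rw [← intervalIntegral.integral_Iic_add_Ioi (gss_integrable.integrableOn) (gss_integrable.integrableOn)]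
  have hpos : 0 < ∫ t in Set.Ioi x, gss t :=
    setIntegral_gss_pos measurableSet_Ioi (by simp)
  have := K_pos
  nlinarith [hsplit]

lemma one_sub_Phi_pos (x : ℝ) : 0 < 1 - Phi x := by linarith [Phi_lt_one x]

lemma Phi_tendsto_one : Tendsto Phi atTop (nhds 1) := by
  have h0 : Tendsto (fun x : ℝ => ∫ t in (0:ℝ)..x, gss t) atTop
      (nhds (∫ t in Set.Ioi (0:ℝ), gss t)) :=
    intervalIntegral_tendsto_integral_Ioi 0 gss_integrable.integrableOn tendsto_id
  have heq : ∀ x : ℝ, Phi x = K * ((∫ t in Set.Iic (0:ℝ), gss t) + ∫ t in (0:ℝ)..x, gss t) := by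
    intro x
    rw [Phi_eq, ← intervalIntegral.integral_Iic_sub_Iic gss_integrable.integrableOn
      gss_integrable.integrableOn]
    ring_nf
  have : Tendsto (fun x : ℝ => K * ((∫ t in Set.Iic (0:ℝ), gss t) + ∫ t in (0:ℝ)..x, gss t))
      atTop (nhds (K * ((∫ t in Set.Iic (0:ℝ), gss t) + ∫ t in Set.Ioi (0:ℝ), gss t))) :=
    (tendsto_const_nhds.add h0).const_mul K
  rw [intervalIntegral.integral_Iic_add_Ioi (gss_integrable.integrableOn) (gss_integrable.integrableOn),
    gss_total] at this
  exact Tendsto.congr (fun x => (heq x).symm) this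

lemma hasDerivAt_Phi (x : ℝ) : HasDerivAt Phi (K * gss x) x := by
  have heq : Phi = fun x => K * ((∫ t in Set.Iic (0:ℝ), gss t) + ∫ t in (0:ℝ)..x, gss t) := by
    funext x
    rw [Phi_eq, ← intervalIntegral.integral_Iic_sub_Iic gss_integrable.integrableOn
      gss_integrable.integrableOn]
    ring_nf
  rw [heq]
  have hftc : HasDerivAt (fun x => ∫ t in (0:ℝ)..x, gss t) (gss x) x := by
    refine intervalIntegral.integral_hasDerivAt_right
      (gss_integrable.intervalIntegrable) ?_ gss_cont.continuousAt
    exact gss_cont.stronglyMeasurableAtFilter _ _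
  simpa using (hftc.const_add (∫ t in Set.Iic (0:ℝ), gss t)).const_mul K

lemma hasDerivAt_Kgss (x : ℝ) :
    HasDerivAt (fun x => K * gss x) (-(x * (K * gss x))) x := by
  have h1 : HasDerivAt (fun x : ℝ => -x ^ 2 / 2) (-x) x := by
    have := ((hasDerivAt_pow 2 x).neg).div_const 2
    simpa using this.congr_deriv (by push_cast; ring)
  have h2 : HasDerivAt (fun x : ℝ => Real.exp (-x ^ 2 / 2)) (Real.exp (-x^2/2) * (-x)) x :=
    h1.exp
  have := h2.const_mul K
  unfold gss
  exact this.congr_deriv (by ring)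

lemma gss_tendsto_zero : Tendsto gss atTop (nhds 0) := by
  have h1 : Tendsto (fun x : ℝ => -x ^ 2 / 2) atTop atBot := by
    apply Tendsto.atBot_div_const (by norm_num)
    exact tendsto_neg_atTop_atBot.comp (tendsto_pow_atTop two_ne_zero)
  exact Real.tendsto_exp_atBot.comp h1

lemma ratio_tendsto : Tendsto (fun x : ℝ => x ^ 2 / (x ^ 2 + 1)) atTop (nhds 1) := by
  have h1 : Tendsto (fun x : ℝ => x ^ 2 + 1) atTop atTop :=
    tendsto_atTop_add_const_right _ 1 (tendsto_pow_atTop (by norm_num))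
  have h2 : Tendsto (fun x : ℝ => 1 - 1 / (x ^ 2 + 1)) atTop (nhds (1 - 0)) :=
    tendsto_const_nhds.sub (Tendsto.div_atTop tendsto_const_nhds h1)
  rw [sub_zero] at h2
  apply h2.congr'
  filter_upwards [eventually_gt_atTop (0:ℝ)] with x hx
  have : (0:ℝ) < x ^ 2 + 1 := by positivity
  field_simp
  ring

lemma mills_inv : Tendsto (fun x => (1 - Phi x) / (K * gss x / x)) atTop (nhds 1) := by
  apply HasDerivAt.lhopital_zero_atTop
    (f' := fun x => -(K * gss x))
    (g' := fun x => -(K * gss x) * (x ^ 2 + 1) / x ^ 2)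
  · exact Eventually.of_forall fun x =>
      ((hasDerivAt_Phi x).const_sub 1).congr_deriv (by ring)
  · filter_upwards [eventually_gt_atTop (0:ℝ)] with x hx
    have := (hasDerivAt_Kgss x).div (hasDerivAt_id x) hx.ne'
    exact this.congr_deriv (by simp only [id]; ring)
  · filter_upwards [eventually_gt_atTop (0:ℝ)] with x hx
    have h1 : 0 < K * gss x := mul_pos K_pos (gss_pos x)
    have hnum : -(K * gss x) * (x ^ 2 + 1) < 0 := by nlinarith
    exact ne_of_lt (div_neg_of_neg_of_pos hnum (by positivity))
  · have := Phi_tendsto_one.const_sub 1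
    simpa using this
  · exact Tendsto.div_atTop (gss_tendsto_zero.const_mul K) tendsto_id
  · apply ratio_tendsto.congr'
    filter_upwards [eventually_gt_atTop (0:ℝ)] with x hx
    have h1 : 0 < K * gss x := mul_pos K_pos (gss_pos x)
    have h2 : (0:ℝ) < x ^ 2 + 1 := by positivity
    field_simp
    exact (div_self h1.ne').symm

lemma mills : Tendsto (fun x => K * gss x / (x * (1 - Phi x))) atTop (nhds 1) := by
  have h := mills_inv.inv₀ (by norm_num)
  rw [inv_one] at h
  apply h.congr'
  filter_upwards [eventually_gt_atTop (0:ℝ)] with x hx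
  have h1 : 0 < K * gss x := mul_pos K_pos (gss_pos x)
  have h2 : 0 < 1 - Phi x := one_sub_Phi_pos x
  rw [inv_div, div_div]

lemma sqrt_top : Tendsto Real.sqrt atTop atTop :=
  (tendsto_rpow_atTop (by norm_num)).congr fun x => (Real.sqrt_eq_rpow x).symm

lemma hasDerivAt_logit {p : ℝ} (h0 : 0 < p) (h1 : p < 1) :
    HasDerivAt logit (1 / p + 1 / (1 - p)) p := by
  have ha : HasDerivAt Real.log (1 / p) p := by
    simpa [one_div] using Real.hasDerivAt_log h0.ne'
  have hb : HasDerivAt (fun x : ℝ => 1 - x) (-1) p := by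
    simpa using (hasDerivAt_id p).const_sub 1
  have hc : HasDerivAt (fun x : ℝ => Real.log (1 - x)) ((1 - p)⁻¹ * (-1)) p :=
    (Real.hasDerivAt_log (by linarith)).comp p hb
  have := ha.sub hc
  unfold logit
  exact this.congr_deriv (by ring)

lemma pos_case (a z : ℝ) (ha : 0 < a) :
    Tendsto (deriv (fun c : ℝ => logit (Phi (a * Real.sqrt c - z))))
      atTop (nhds (a ^ 2 / 2)) := by
  set u : ℝ → ℝ := fun c => a * Real.sqrt c - z with hu_def
  have hu_top : Tendsto u atTop atTop := by
    have h1 : Tendsto (fun c : ℝ => a * Real.sqrt c) atTop atTop :=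
      sqrt_top.const_mul_atTop ha
    have := tendsto_atTop_add_const_right atTop (-z) h1
    simpa [sub_eq_add_neg, hu_def] using this
  -- derivative formula
  have hD : ∀ c : ℝ, 0 < c →
      HasDerivAt (fun c : ℝ => logit (Phi (a * Real.sqrt c - z)))
        ((1 / Phi (u c) + 1 / (1 - Phi (u c))) * (K * gss (u c) * (a * (1 / (2 * Real.sqrt c))))) c := by
    intro c hc
    have hsq : HasDerivAt Real.sqrt (1 / (2 * Real.sqrt c)) c := Real.hasDerivAt_sqrt hc.ne'
    have hu : HasDerivAt u (a * (1 / (2 * Real.sqrt c))) c := (hsq.const_mul a).sub_const z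
    have hPhi : HasDerivAt Phi (K * gss (u c)) (u c) := hasDerivAt_Phi (u c)
    have hlg : HasDerivAt logit (1 / Phi (u c) + 1 / (1 - Phi (u c))) (Phi (u c)) :=
      hasDerivAt_logit (Phi_pos _) (Phi_lt_one _)
    simpa [Function.comp_def, mul_assoc] using (hlg.comp (u c) hPhi).comp c hu
  -- limit
  have hmills : Tendsto (fun c => K * gss (u c) / (u c * (1 - Phi (u c)))) atTop (nhds 1) :=
    mills.comp hu_top
  have hPhiInv : Tendsto (fun c => (Phi (u c))⁻¹) atTop (nhds 1) := by
    have := (Phi_tendsto_one.comp hu_top).inv₀ one_ne_zero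
    simpa using this
  have hsecond : Tendsto (fun c => u c * a / (2 * Real.sqrt c)) atTop (nhds (a ^ 2 / 2)) := by
    have h0 : Tendsto (fun c : ℝ => a ^ 2 / 2 - z * a / 2 * (Real.sqrt c)⁻¹) atTop
        (nhds (a ^ 2 / 2 - z * a / 2 * 0)) :=
      tendsto_const_nhds.sub ((tendsto_inv_atTop_zero.comp sqrt_top).const_mul (z * a / 2))
    rw [mul_zero, sub_zero] at h0
    apply h0.congr'
    filter_upwards [eventually_gt_atTop (0:ℝ)] with c hc
    have hs : 0 < Real.sqrt c := Real.sqrt_pos.mpr hc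
    field_simp [hu_def]
    ring
  have hprod : Tendsto (fun c => (K * gss (u c) / (u c * (1 - Phi (u c)))) *
      (u c * a / (2 * Real.sqrt c)) * (Phi (u c))⁻¹) atTop (nhds (a ^ 2 / 2)) := by
    have := (hmills.mul hsecond).mul hPhiInv
    simpa using this
  apply hprod.congr'
  filter_upwards [eventually_gt_atTop (0:ℝ), hu_top.eventually (eventually_gt_atTop (0:ℝ))]
    with c hc huc
  have hs : 0 < Real.sqrt c := Real.sqrt_pos.mpr hc
  have hp0 : 0 < Phi (u c) := Phi_pos _
  have hp1 : 0 < 1 - Phi (u c) := one_sub_Phi_pos _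
  have hKg : 0 < K * gss (u c) := mul_pos K_pos (gss_pos _)
  rw [(hD c hc).deriv]
  field_simp
  ring

lemma Phi_neg (y : ℝ) : Phi (-y) = 1 - Phi y := by
  have hgsym : ∀ x : ℝ, gss (-x) = gss x := fun x => by unfold gss; ring_nf
  have h1 : (∫ t in Set.Iic (-y), gss t) = ∫ t in Set.Ioi y, gss t := by
    have h := integral_comp_neg_Iic (-y) gss
    rw [neg_neg] at h
    simp_rw [hgsym] at h
    exact h
  have h2 : (∫ t in Set.Iic y, gss t) + ∫ t in Set.Ioi y, gss t = ∫ t : ℝ, gss t :=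
    intervalIntegral.integral_Iic_add_Ioi gss_integrable.integrableOn gss_integrable.integrableOn
  have h3 := gss_total
  rw [Phi_eq, Phi_eq, h1]
  linear_combination K * h2 + h3

lemma logit_one_sub (p : ℝ) : logit (1 - p) = - logit p := by
  unfold logit
  rw [sub_sub_cancel]
  ring

theorem limiting_derivative_one_sided
    (a z : ℝ) (ha : a ≠ 0) :
    Tendsto (deriv (fun c : ℝ => logit (Phi (a * Real.sqrt c - z))))
      atTop (nhds (a * |a| / 2)) := by
  rcases lt_or_gt_of_ne ha with hneg | hpos
  · have key := pos_case (-a) (-z) (by linarith)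
    have hfun : (fun c : ℝ => logit (Phi (a * Real.sqrt c - z)))
        = fun c : ℝ => - logit (Phi (-a * Real.sqrt c - -z)) := by
      funext c
      have : a * Real.sqrt c - z = -(-a * Real.sqrt c - -z) := by ring
      rw [this, Phi_neg, logit_one_sub]
    rw [hfun]
    have hderiv : deriv (fun c : ℝ => - logit (Phi (-a * Real.sqrt c - -z)))
        = fun c => - deriv (fun c : ℝ => logit (Phi (-a * Real.sqrt c - -z))) c := by
      funext c
      exact deriv.neg
    rw [hderiv]
    have := key.neg
    have habs : a * |a| / 2 = -((-a) ^ 2 / 2) := by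
      rw [abs_of_neg hneg]; ring
    rw [habs]
    exact this
  · have := pos_case a z hpos
    have habs : a * |a| / 2 = a ^ 2 / 2 := by
      rw [abs_of_pos hpos]; ring
    rw [habs]
    exact this
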